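/- arXiv:2509.23534 — 3 statements merged into one kernel-verified Lean document; each statement's English description precedes it below -/
import Mathlib

section
/- Let d ≥ 1 be an integer and α ∈ (0,2). For every t > 0 and all x, y ∈ ℝ^d: g(t, x−y) ≥ κ_{d,α}^{−1}·t^{d/α}·g(t, √2·x)·g(t, √2·y). -/
open MeasureTheory Real

/-- `κ_{d,α} = Γ((d+α)/2)/(π^{d/2} Γ(α/2))`. -/
noncomputable def kappaD (d : ℕ) (α : ℝ) : ℝ :=
  Real.Gamma (((d:ℝ) + α) / 2) / (Real.pi ^ ((d:ℝ) / 2) * Real.Gamma (α / 2))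

/-- `g(t,x) = κ_{d,α} t / (t^{2/α} + |x|²)^{(d+α)/2}`. -/
noncomputable def gKer (d : ℕ) (α : ℝ) (t : ℝ) (x : EuclideanSpace ℝ (Fin d)) : ℝ :=
  kappaD d α * t / (t ^ (2/α) + ‖x‖ ^ 2) ^ (((d:ℝ) + α) / 2)

/-- `g(t, x−y) ≥ κ_{d,α}^{−1} t^{d/α} g(t, √2 x) g(t, √2 y)`. -/
theorem g_sub_lower_bound
    (d : ℕ) (hd : 1 ≤ d) (α : ℝ) (hα : α ∈ Set.Ioo (0:ℝ) 2)
    (t : ℝ) (ht : 0 < t) (x y : EuclideanSpace ℝ (Fin d)) :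
    (kappaD d α)⁻¹ * t ^ ((d:ℝ)/α) * gKer d α t (Real.sqrt 2 • x) * gKer d α t (Real.sqrt 2 • y)
      ≤ gKer d α t (x - y) := by
  obtain ⟨hα0, hα2⟩ := hα
  have hκ : 0 < kappaD d α := by
    unfold kappaD
    apply div_pos (Real.Gamma_pos_of_pos (by positivity))
    exact mul_pos (Real.rpow_pos_of_pos Real.pi_pos _) (Real.Gamma_pos_of_pos (by positivity))
  unfold gKer
  have hnx : ‖Real.sqrt 2 • x‖ ^ 2 = 2 * ‖x‖ ^ 2 := by
    rw [norm_smul, Real.norm_eq_abs, abs_of_nonneg (Real.sqrt_nonneg 2), mul_pow,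
      Real.sq_sqrt (by norm_num : (0:ℝ) ≤ 2)]
  have hny : ‖Real.sqrt 2 • y‖ ^ 2 = 2 * ‖y‖ ^ 2 := by
    rw [norm_smul, Real.norm_eq_abs, abs_of_nonneg (Real.sqrt_nonneg 2), mul_pow,
      Real.sq_sqrt (by norm_num : (0:ℝ) ≤ 2)]
  rw [hnx, hny]
  set p : ℝ := ((d:ℝ) + α) / 2 with hp
  have hp0 : 0 < p := by positivity
  set A : ℝ := t ^ (2/α) with hA
  have hA0 : 0 < A := Real.rpow_pos_of_pos ht _
  set X := ‖x‖ ^ 2 with hX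
  set Y := ‖y‖ ^ 2 with hY
  set S := ‖x - y‖ ^ 2 with hS
  have hX0 : 0 ≤ X := sq_nonneg _
  have hY0 : 0 ≤ Y := sq_nonneg _
  have hS0 : 0 ≤ S := sq_nonneg _
  have hSb : S ≤ 2 * X + 2 * Y := by
    have h1 : ‖x - y‖ ≤ ‖x‖ + ‖y‖ := norm_sub_le x y
    have h2 : 0 ≤ ‖x - y‖ := norm_nonneg _
    nlinarith [hS, hX, hY, mul_self_le_mul_self h2 h1, sq_nonneg (‖x‖ - ‖y‖),
      norm_nonneg x, norm_nonneg y]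
  have hD1 : (0:ℝ) < (A + 2 * X) ^ p := Real.rpow_pos_of_pos (by linarith) _
  have hD2 : (0:ℝ) < (A + 2 * Y) ^ p := Real.rpow_pos_of_pos (by linarith) _
  have hDS : (0:ℝ) < (A + S) ^ p := Real.rpow_pos_of_pos (by linarith) _
  -- A^p = t^(d/α) * t
  have hAp : A ^ p = t ^ ((d:ℝ)/α) * t := by
    have hexp : 2/α * p = (d:ℝ)/α + 1 := by
      rw [hp]; field_simp
    rw [hA, ← Real.rpow_mul ht.le, hexp, Real.rpow_add ht, Real.rpow_one]
  have key : A ^ p * (A + S) ^ p ≤ (A + 2*X) ^ p * (A + 2*Y) ^ p := by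
    rw [← Real.mul_rpow hA0.le (by linarith), ← Real.mul_rpow (by linarith) (by linarith)]
    exact Real.rpow_le_rpow (by positivity) (by nlinarith) hp0.le
  have step : A ^ p / ((A + 2*X) ^ p * (A + 2*Y) ^ p) ≤ 1 / (A + S) ^ p := by
    rw [div_le_div_iff₀ (mul_pos hD1 hD2) hDS, one_mul]
    exact key
  have hEq : (kappaD d α)⁻¹ * t ^ ((d:ℝ)/α) * (kappaD d α * t / (A + 2*X) ^ p)
      * (kappaD d α * t / (A + 2*Y) ^ p)
      = (kappaD d α * t) * (A ^ p / ((A + 2*X) ^ p * (A + 2*Y) ^ p)) := by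
    rw [hAp]; field_simp
  calc (kappaD d α)⁻¹ * t ^ ((d:ℝ)/α) * (kappaD d α * t / (A + 2*X) ^ p)
        * (kappaD d α * t / (A + 2*Y) ^ p)
      = (kappaD d α * t) * (A ^ p / ((A + 2*X) ^ p * (A + 2*Y) ^ p)) := hEq
    _ ≤ (kappaD d α * t) * (1 / (A + S) ^ p) :=
        mul_le_mul_of_nonneg_left step (by positivity)
    _ = kappaD d α * t / (A + S) ^ p := by ring
end

section
/- Let d ≥ 1 be an integer, α ∈ (0,2) and p > d/(d+α). Then for every t > 0: ∫_{ℝ^d} g(t,y)^p dy = (κ_{d,α}^p·π^{d/2}/t^{(p−1)d/α})·Γ(p(d+α)/2 − d/2)/Γ(p(d+α)/2). -/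
open MeasureTheory Real

/-!
Subordination: `(a + |y|²)^(-s) = Γ(s)⁻¹ ∫₀^∞ u^(s-1) e^(-(a + |y|²) u) du`. After exchanging the
two integrals (Tonelli), the integral over `y` is Gaussian and equals `(π/u)^(d/2)`, and what is
left over `u` is again a Gamma integral; this gives
`∫ (a + |y|²)^(-s) dy = π^(d/2) a^(d/2 - s) Γ(s - d/2) / Γ(s)` for `s > d/2`.
Since `g(t,y)^p = (κ t)^p (t^(2/α) + |y|²)^(-p(d+α)/2)`, the theorem is the case
`a = t^(2/α)`, `s = p(d+α)/2`.
-/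

open Set Module
open scoped ENNReal

theorem lintegral_ofReal_eq_of_integral_eq {X : Type*} [MeasurableSpace X] {μ : Measure X}
    {f : X → ℝ} {c : ℝ} (hf : 0 ≤ᵐ[μ] f) (h : ∫ x, f x ∂μ = c) (hc : c ≠ 0) :
    ∫⁻ x, ENNReal.ofReal (f x) ∂μ = ENNReal.ofReal c := by
  rw [← h, ofReal_integral_eq_lintegral_ofReal (Integrable.of_integral_ne_zero (h ▸ hc)) hf]

theorem lintegral_rpow_mul_exp_neg_mul_Ioi {s b : ℝ} (hs : 0 < s) (hb : 0 < b) :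
    ∫⁻ u in Ioi (0:ℝ), ENNReal.ofReal (u ^ (s - 1) * exp (-(b * u)))
      = ENNReal.ofReal (b ^ (-s) * Gamma s) := by
  refine lintegral_ofReal_eq_of_integral_eq ?_ ?_ (by have := Gamma_pos_of_pos hs; positivity)
  · exact (ae_restrict_iff' measurableSet_Ioi).mpr <| .of_forall fun u hu =>
      mul_nonneg (rpow_nonneg (le_of_lt hu) _) (exp_pos _).le
  · rw [integral_rpow_mul_exp_neg_mul_Ioi hs hb, one_div, inv_rpow hb.le, rpow_neg hb.le]

theorem ofReal_rpow_neg_eq_lintegral {s b : ℝ} (hs : 0 < s) (hb : 0 < b) :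
    ENNReal.ofReal (b ^ (-s)) = ENNReal.ofReal (Gamma s)⁻¹ *
      ∫⁻ u in Ioi (0:ℝ), ENNReal.ofReal (u ^ (s - 1) * exp (-(b * u))) := by
  rw [lintegral_rpow_mul_exp_neg_mul_Ioi hs hb, ← ENNReal.ofReal_mul (by positivity),
    mul_comm, mul_assoc, mul_inv_cancel₀ (Gamma_pos_of_pos hs).ne', mul_one]

section InnerProductSpace

variable {V : Type*} [NormedAddCommGroup V] [InnerProductSpace ℝ V] [FiniteDimensional ℝ V]
  [MeasurableSpace V] [BorelSpace V]

theorem lintegral_exp_neg_mul_sq_norm {b : ℝ} (hb : 0 < b) :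
    ∫⁻ v : V, ENNReal.ofReal (exp (-b * ‖v‖ ^ 2))
      = ENNReal.ofReal ((π / b) ^ ((finrank ℝ V : ℝ) / 2)) :=
  lintegral_ofReal_eq_of_integral_eq (.of_forall fun _ => (exp_pos _).le)
    (GaussianFourier.integral_rexp_neg_mul_sq_norm hb) (by positivity)

theorem lintegral_add_sq_norm_rpow_neg {a s : ℝ} (ha : 0 < a)
    (hs : (finrank ℝ V : ℝ) / 2 < s) :
    ∫⁻ v : V, ENNReal.ofReal ((a + ‖v‖ ^ 2) ^ (-s)) = ENNReal.ofReal
      (π ^ ((finrank ℝ V : ℝ) / 2) * a ^ ((finrank ℝ V : ℝ) / 2 - s) *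
        (Gamma (s - (finrank ℝ V : ℝ) / 2) / Gamma s)) := by
  set n : ℝ := (finrank ℝ V : ℝ) with hn
  have hs0 : 0 < s := lt_of_le_of_lt (by positivity) hs
  have hsn : 0 < s - n / 2 := by linarith
  have hgauss : ∀ u ∈ Ioi (0:ℝ), ∫⁻ v : V,
      ENNReal.ofReal (u ^ (s - 1) * exp (-((a + ‖v‖ ^ 2) * u))) =
        ENNReal.ofReal (π ^ (n / 2) * (u ^ (s - n / 2 - 1) * exp (-(a * u)))) := by
    intro u hu
    have hu : 0 < u := hu
    have hsplit : ∀ v : V, u ^ (s - 1) * exp (-((a + ‖v‖ ^ 2) * u)) =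
        u ^ (s - 1) * exp (-(a * u)) * exp (-u * ‖v‖ ^ 2) := by
      intro v
      rw [mul_assoc, ← exp_add]
      ring_nf
    simp_rw [hsplit, ENNReal.ofReal_mul (by positivity : 0 ≤ u ^ (s - 1) * exp (-(a * u)))]
    rw [lintegral_const_mul' _ _ ENNReal.ofReal_ne_top, lintegral_exp_neg_mul_sq_norm hu, ← hn,
      ← ENNReal.ofReal_mul (by positivity)]
    congr 1
    rw [div_rpow pi_pos.le hu.le, show s - n / 2 - 1 = (s - 1) - n / 2 by ring,
      rpow_sub hu (s - 1) (n / 2)]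
    ring
  calc ∫⁻ v : V, ENNReal.ofReal ((a + ‖v‖ ^ 2) ^ (-s))
      = ENNReal.ofReal (Gamma s)⁻¹ * ∫⁻ v : V, ∫⁻ u in Ioi (0:ℝ),
          ENNReal.ofReal (u ^ (s - 1) * exp (-((a + ‖v‖ ^ 2) * u))) := by
        simp_rw [ofReal_rpow_neg_eq_lintegral hs0 (by positivity : 0 < a + ‖_‖ ^ 2)]
        exact lintegral_const_mul' _ _ ENNReal.ofReal_ne_top
    _ = ENNReal.ofReal (Gamma s)⁻¹ * ∫⁻ u in Ioi (0:ℝ),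
          ENNReal.ofReal (π ^ (n / 2) * (u ^ (s - n / 2 - 1) * exp (-(a * u)))) := by
        rw [lintegral_lintegral_swap (by fun_prop),
          setLIntegral_congr_fun measurableSet_Ioi hgauss]
    _ = _ := by
        simp_rw [ENNReal.ofReal_mul (by positivity : 0 ≤ π ^ (n / 2))]
        rw [lintegral_const_mul' _ _ ENNReal.ofReal_ne_top,
          lintegral_rpow_mul_exp_neg_mul_Ioi hsn ha, ← ENNReal.ofReal_mul (by positivity),
          ← ENNReal.ofReal_mul (by positivity)]
        congr 1
        rw [show -(s - n / 2) = n / 2 - s by ring]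
        ring

theorem integral_add_sq_norm_rpow_neg {a s : ℝ} (ha : 0 < a)
    (hs : (finrank ℝ V : ℝ) / 2 < s) :
    ∫ v : V, (a + ‖v‖ ^ 2) ^ (-s) = π ^ ((finrank ℝ V : ℝ) / 2) *
      a ^ ((finrank ℝ V : ℝ) / 2 - s) * (Gamma (s - (finrank ℝ V : ℝ) / 2) / Gamma s) := by
  have hs0 : 0 < s := lt_of_le_of_lt (by positivity) hs
  rw [integral_eq_lintegral_of_nonneg_ae (.of_forall fun v => by positivity)
    (by fun_prop : Measurable _).aestronglyMeasurable,
    lintegral_add_sq_norm_rpow_neg ha hs, ENNReal.toReal_ofReal (by positivity)]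

end InnerProductSpace

theorem kappaD_pos (d : ℕ) {α : ℝ} (hα : 0 < α) : 0 < kappaD d α :=
  div_pos (Gamma_pos_of_pos (by positivity))
    (mul_pos (rpow_pos_of_pos pi_pos _) (Gamma_pos_of_pos (by positivity)))

theorem gKer_rpow {d : ℕ} {α t p : ℝ} (hα : 0 < α) (ht : 0 < t)
    (x : EuclideanSpace ℝ (Fin d)) :
    gKer d α t x ^ p =
      (kappaD d α * t) ^ p * (t ^ (2 / α) + ‖x‖ ^ 2) ^ (-(p * (d + α) / 2)) := by
  have hκ := kappaD_pos d hα
  have hb : 0 < t ^ (2 / α) + ‖x‖ ^ 2 := by positivity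
  rw [gKer, div_rpow (by positivity) (by positivity), ← rpow_mul hb.le, div_eq_mul_inv,
    ← rpow_neg hb.le]
  ring_nf

theorem g_pow_integral_value_general
    (d : ℕ) (α : ℝ) (hα : α ∈ Set.Ioo (0:ℝ) 2)
    (p : ℝ) (hp : p > (d:ℝ) / ((d:ℝ) + α)) (t : ℝ) (ht : 0 < t) :
    ∫ y : EuclideanSpace ℝ (Fin d), gKer d α t y ^ p
      = kappaD d α ^ p * Real.pi ^ ((d:ℝ)/2) / t ^ ((p - 1) * d / α) *
          (Real.Gamma (p * ((d:ℝ) + α) / 2 - (d:ℝ) / 2) / Real.Gamma (p * ((d:ℝ) + α) / 2)) := by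
  have hα0 : 0 < α := hα.1
  have hs : (finrank ℝ (EuclideanSpace ℝ (Fin d)) : ℝ) / 2 < p * (d + α) / 2 := by
    rw [finrank_euclideanSpace_fin]
    have := (div_lt_iff₀ (by positivity : (0:ℝ) < d + α)).mp hp
    linarith
  have htpow : t ^ p * (t ^ (2 / α)) ^ ((d : ℝ) / 2 - p * (d + α) / 2) =
      (t ^ ((p - 1) * d / α))⁻¹ := by
    rw [← rpow_mul ht.le, ← rpow_add ht, ← rpow_neg ht.le]
    congr 1
    field_simp
    ring
  simp_rw [gKer_rpow hα0 ht]
  rw [integral_const_mul, integral_add_sq_norm_rpow_neg (by positivity) hs,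
    finrank_euclideanSpace_fin, mul_rpow (kappaD_pos d hα0).le ht.le, div_eq_mul_inv (kappaD d α ^ p * _), ← htpow]
  ring

/-- exact value of `∫ g(t,y)^p dy`. -/
theorem g_pow_integral_value
    (d : ℕ) (hd : 1 ≤ d) (α : ℝ) (hα : α ∈ Set.Ioo (0:ℝ) 2)
    (p : ℝ) (hp : p > (d:ℝ) / ((d:ℝ) + α)) (t : ℝ) (ht : 0 < t) :
    ∫ y : EuclideanSpace ℝ (Fin d), gKer d α t y ^ p
      = kappaD d α ^ p * Real.pi ^ ((d:ℝ)/2) / t ^ ((p - 1) * d / α) *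
          (Real.Gamma (p * ((d:ℝ) + α) / 2 - (d:ℝ) / 2) / Real.Gamma (p * ((d:ℝ) + α) / 2)) :=
  g_pow_integral_value_general d α hα p hp t ht
end

section
/- Let X be a real-valued integrable random variable with E[X] = 0. Then for every a ∈ ℝ and every p ∈ (1,3]: E[|a+X|^p] ≥ κ^{(p)}·(|a|^p + E[|X|^p]), where κ^{(p)} = 1/4 if 1 < p ≤ 2 and κ^{(p)} = 1/6 if 2 < p ≤ 3, and both sides are interpreted as values in [0,∞]. -/
open MeasureTheory Real

private lemma rpow_le_rpow_exp_ge {x z y : ℝ} (hx0 : 0 ≤ x) (hx1 : x ≤ 1) (hz : 0 < z)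
    (hzy : z ≤ y) : x ^ y ≤ x ^ z := by
  rcases eq_or_lt_of_le hx0 with h | h
  · rw [← h, Real.zero_rpow (by linarith : y ≠ 0), Real.zero_rpow hz.ne']
  · exact Real.rpow_le_rpow_of_exponent_ge h hx1 hzy

private lemma sub_one_rpow_ge {t p : ℝ} (ht : 2 ≤ t) (hp1 : 1 ≤ p) :
    t ^ p - p * t ^ (p - 1) ≤ (t - 1) ^ p := by
  have ht0 : (0:ℝ) < t := by linarith
  have hinv : 1 / t ≤ 1 / 2 := by
    apply div_le_div_of_nonneg_left (by norm_num) (by norm_num) ht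
  have hbern : 1 + p * (-(1/t)) ≤ (1 + (-(1/t))) ^ p :=
    one_add_mul_self_le_rpow_one_add (by nlinarith [one_div_pos.mpr ht0] : (-1:ℝ) ≤ -(1/t)) hp1
  have h2 : t ^ p * (1 + p * (-(1/t))) ≤ t ^ p * (1 + (-(1/t))) ^ p :=
    mul_le_mul_of_nonneg_left hbern (Real.rpow_nonneg ht0.le p)
  have h3 : t ^ p * (1 + (-(1/t))) ^ p = (t - 1) ^ p := by
    rw [← Real.mul_rpow ht0.le (by linarith [one_div_pos.mpr ht0])]
    congr 1
    field_simp
    ring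
  have h4 : t ^ p * (1 + p * (-(1/t))) = t ^ p - p * t ^ (p - 1) := by
    rw [Real.rpow_sub_one ht0.ne' p]
    field_simp
    ring
  rw [h3] at h2
  rw [h4] at h2
  exact h2

private lemma rpow_sq_le {t : ℝ} (ht : 1 ≤ t) {p : ℝ} (hp2 : p ≤ 2) : t ^ p ≤ t * t := by
  have := Real.rpow_le_rpow_of_exponent_le ht hp2
  rwa [show (2:ℝ) = ((2:ℕ):ℝ) by norm_num, Real.rpow_natCast, sq] at this

private lemma rpow_cube_le {t : ℝ} (ht : 1 ≤ t) {p : ℝ} (hp3 : p ≤ 3) : t ^ p ≤ t * t * t := by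
  have := Real.rpow_le_rpow_of_exponent_le ht hp3
  rwa [show (3:ℝ) = ((3:ℕ):ℝ) by norm_num, Real.rpow_natCast, pow_succ, sq] at this

private lemma one_le_rpow_aux {t : ℝ} (ht : 1 ≤ t) {q : ℝ} (hq : 0 ≤ q) : 1 ≤ t ^ q := by
  have := Real.rpow_le_rpow_of_exponent_le ht hq
  rwa [Real.rpow_zero] at this

private lemma pw1 {p : ℝ} (hp1 : 1 ≤ p) (hp2 : p ≤ 2) (y : ℝ) :
    1/4 + |y| ^ p / 4 + 3/4 * y ≤ |1 + y| ^ p := by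
  have hp0 : (0:ℝ) < p := by linarith
  rcases le_or_gt 0 y with hy | hy
  · rw [abs_of_nonneg hy, abs_of_nonneg (by linarith : (0:ℝ) ≤ 1 + y)]
    have h1 : y ^ p ≤ (1+y) ^ p := Real.rpow_le_rpow hy (by linarith) hp0.le
    have h2 : 1 + y ≤ (1+y) ^ p := by
      calc 1 + y = (1+y) ^ (1:ℝ) := (Real.rpow_one _).symm
      _ ≤ (1+y) ^ p := Real.rpow_le_rpow_of_exponent_le (by linarith) hp1
    linarith
  · set t : ℝ := -y with htdef
    have hy' : y = -t := by simp [htdef]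
    have ht0 : 0 < t := by simp [htdef]; linarith
    have habsy : |y| = t := by rw [abs_of_neg hy]
    rcases le_or_gt t 1 with ht1 | ht1
    · -- y ∈ [-1,0)
      have habs : |1 + y| = 1 - t := by rw [abs_of_nonneg (by linarith)]; linarith
      rw [habs, habsy]
      have h1 : (1-t) ^ (2:ℝ) ≤ (1-t) ^ p :=
        rpow_le_rpow_exp_ge (by linarith) (by linarith) hp0 hp2
      rw [show (2:ℝ) = ((2:ℕ):ℝ) by norm_num, Real.rpow_natCast, sq] at h1
      have h2 : t ^ p ≤ t := by
        have := rpow_le_rpow_exp_ge ht0.le ht1 one_pos hp1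
        rwa [Real.rpow_one] at this
      nlinarith [sq_nonneg (t - 3/4)]
    · have habs : |1 + y| = t - 1 := by rw [abs_of_nonpos (by linarith)]; linarith
      rw [habs, habsy]
      rcases le_or_gt t 2 with ht2 | ht2
      · -- t ∈ (1,2]
        have h1 : (0:ℝ) ≤ (t-1) ^ p := Real.rpow_nonneg (by linarith) p
        have h2 : t ^ p ≤ t * t := rpow_sq_le (by linarith) hp2
        nlinarith [mul_nonneg (sub_nonneg.2 ht1.le) (sub_nonneg.2 ht2)]
      · rcases le_or_gt t 6 with ht6 | ht6
        · -- t ∈ (2,6]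
          have h1 : t - 1 ≤ (t-1) ^ p := by
            calc t - 1 = (t-1) ^ (1:ℝ) := (Real.rpow_one _).symm
            _ ≤ (t-1) ^ p := Real.rpow_le_rpow_of_exponent_le (by linarith) hp1
          have h2 : t ^ p ≤ t * t := rpow_sq_le (by linarith) hp2
          nlinarith [mul_nonneg (sub_nonneg.2 ht2.le) (sub_nonneg.2 ht6)]
        · -- t > 6
          have h1 : t ^ p - p * t ^ (p-1) ≤ (t-1) ^ p := sub_one_rpow_ge (by linarith) hp1
          have h2 : p * t ^ (p-1) ≤ 2 * t ^ (p-1) :=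
            mul_le_mul_of_nonneg_right hp2 (Real.rpow_nonneg ht0.le _)
          have h3 : t ^ (p-1) * t = t ^ p := by
            rw [← Real.rpow_add_one ht0.ne' (p-1)]; ring_nf
          have h4 : 1 ≤ t ^ (p-1) := one_le_rpow_aux (by linarith) (by linarith)
          have h5 : 3/4 * t - 2 ≤ t ^ (p-1) * (3/4 * t - 2) :=
            le_mul_of_one_le_left (by linarith) h4
          nlinarith

private lemma pw2 {p : ℝ} (hp1 : 2 ≤ p) (hp2 : p ≤ 3) (y : ℝ) :
    1/6 + |y| ^ p / 6 + 2 * y ≤ |1 + y| ^ p := by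
  have hp0 : (0:ℝ) < p := by linarith
  rcases le_or_gt 0 y with hy | hy
  · rw [abs_of_nonneg hy, abs_of_nonneg (by linarith : (0:ℝ) ≤ 1 + y)]
    have h1 : y ^ p ≤ (1+y) ^ p := Real.rpow_le_rpow hy (by linarith) hp0.le
    have h2 : (1+y) * (1+y) ≤ (1+y) ^ p := by
      have := Real.rpow_le_rpow_of_exponent_le (by linarith : (1:ℝ) ≤ 1 + y) hp1
      rwa [show (2:ℝ) = ((2:ℕ):ℝ) by norm_num, Real.rpow_natCast, sq] at this
    nlinarith [sq_nonneg (y - 1/5)]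
  · set t : ℝ := -y with htdef
    have ht0 : 0 < t := by simp only [htdef]; linarith
    have habsy : |y| = t := by rw [abs_of_neg hy]
    rcases le_or_gt t 1 with ht1 | ht1
    · have habs : |1 + y| = 1 - t := by rw [abs_of_nonneg (by linarith)]; linarith
      rw [habs, habsy]
      have h1 : (1-t) ^ (3:ℝ) ≤ (1-t) ^ p :=
        rpow_le_rpow_exp_ge (by linarith) (by linarith) hp0 hp2
      rw [show (3:ℝ) = ((3:ℕ):ℝ) by norm_num, Real.rpow_natCast, pow_succ, sq] at h1
      have h2 : t ^ p ≤ t * t := by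
        have := rpow_le_rpow_exp_ge ht0.le ht1 two_pos hp1
        rwa [show (2:ℝ) = ((2:ℕ):ℝ) by norm_num, Real.rpow_natCast, sq] at this
      nlinarith [sq_nonneg (t - 3/11), mul_nonneg (mul_nonneg ht0.le ht0.le) (sub_nonneg.2 ht1)]
    · have habs : |1 + y| = t - 1 := by rw [abs_of_nonpos (by linarith)]; linarith
      rw [habs, habsy]
      rcases le_or_gt t 2 with ht2 | ht2
      · have h1 : (0:ℝ) ≤ (t-1) ^ p := Real.rpow_nonneg (by linarith) p
        have h2 : t ^ p ≤ t * t * t := rpow_cube_le (by linarith) hp2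
        nlinarith [mul_nonneg (sub_nonneg.2 ht1.le) (sub_nonneg.2 ht2)]
      · rcases le_or_gt t 6 with ht6 | ht6
        · have h1 : (t-1) * (t-1) ≤ (t-1) ^ p := by
            have := Real.rpow_le_rpow_of_exponent_le (by linarith : (1:ℝ) ≤ t - 1) hp1
            rwa [show (2:ℝ) = ((2:ℕ):ℝ) by norm_num, Real.rpow_natCast, sq] at this
          have h2 : t ^ p ≤ t * t * t := rpow_cube_le (by linarith) hp2
          nlinarith [mul_nonneg (mul_nonneg ht0.le ht0.le) (sub_nonneg.2 ht6)]
        · have h1 : t ^ p - p * t ^ (p-1) ≤ (t-1) ^ p := sub_one_rpow_ge (by linarith) (by linarith)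
          have h2 : p * t ^ (p-1) ≤ 3 * t ^ (p-1) :=
            mul_le_mul_of_nonneg_right hp2 (Real.rpow_nonneg ht0.le _)
          have h3 : t ^ (p-1) * t = t ^ p := by
            rw [← Real.rpow_add_one ht0.ne' (p-1)]; ring_nf
          have h4 : 1 ≤ t ^ (p-1) := one_le_rpow_aux (by linarith) (by linarith)
          have h5 : 5/6 * t - 3 ≤ t ^ (p-1) * (5/6 * t - 3) :=
            le_mul_of_one_le_left (by linarith) h4
          nlinarith

private lemma pw_master {p : ℝ} (a : ℝ) (hp1 : 1 < p) (hp3 : p ≤ 3) :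
    ∃ c : ℝ, ∀ x : ℝ,
      (if p ≤ 2 then (1/4 : ℝ) else (1/6 : ℝ)) * |a| ^ p +
        (if p ≤ 2 then (1/4 : ℝ) else (1/6 : ℝ)) * |x| ^ p + c * x ≤ |a + x| ^ p := by
  set κ : ℝ := if p ≤ 2 then (1/4 : ℝ) else (1/6 : ℝ) with hκ
  set m : ℝ := if p ≤ 2 then (3/4 : ℝ) else (2 : ℝ) with hm
  have hbase : ∀ y : ℝ, κ + κ * |y| ^ p + m * y ≤ |1 + y| ^ p := by
    intro y
    by_cases h2 : p ≤ 2
    · simp only [hκ, hm, if_pos h2]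
      have := pw1 hp1.le h2 y
      linarith
    · simp only [hκ, hm, if_neg h2]
      have := pw2 (by linarith) hp3 y
      linarith
  have hκ1 : κ ≤ 1 := by simp only [hκ]; split_ifs <;> norm_num
  rcases eq_or_ne a 0 with rfl | ha
  · refine ⟨0, fun x => ?_⟩
    have h0 : |(0:ℝ)| ^ p = 0 := by
      rw [abs_zero, Real.zero_rpow (by linarith : p ≠ 0)]
    rw [h0, zero_add]
    have := Real.rpow_nonneg (abs_nonneg x) p
    nlinarith [Real.rpow_nonneg (abs_nonneg x) p, hκ1,
      (by simp only [hκ]; split_ifs <;> norm_num : (0:ℝ) < κ)]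
  · refine ⟨m * |a| ^ p / a, fun x => ?_⟩
    have hbase' := hbase (x / a)
    have hA : (0:ℝ) < |a| ^ p := Real.rpow_pos_of_pos (abs_pos.mpr ha) p
    have key := mul_le_mul_of_nonneg_left hbase' hA.le
    have e1 : |a| ^ p * |1 + x / a| ^ p = |a + x| ^ p := by
      rw [← Real.mul_rpow (abs_nonneg a) (abs_nonneg _), ← abs_mul]
      congr 2
      field_simp
    have e2 : |a| ^ p * |x / a| ^ p = |x| ^ p := by
      rw [← Real.mul_rpow (abs_nonneg a) (abs_nonneg _), ← abs_mul]
      congr 2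
      field_simp
    have e3 : |a| ^ p * (m * (x / a)) = m * |a| ^ p / a * x := by
      field_simp
    calc κ * |a| ^ p + κ * |x| ^ p + m * |a| ^ p / a * x
        = |a| ^ p * (κ + κ * |x / a| ^ p + m * (x / a)) := by
          linear_combination -κ * e2 + e3
      _ ≤ |a| ^ p * |1 + x / a| ^ p := key
      _ = |a + x| ^ p := e1

private lemma abs_rpow_bound {p : ℝ} (hp : 0 ≤ p) (a x : ℝ) :
    |x| ^ p ≤ 2 ^ p * (|a + x| ^ p + |a| ^ p) := by
  have h1 : |x| ≤ |a + x| + |a| := by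
    calc |x| = |(a + x) + (-a)| := by ring_nf
    _ ≤ |a + x| + |(-a)| := abs_add_le _ _
    _ = |a + x| + |a| := by rw [abs_neg]
  have h3 : |a + x| + |a| ≤ 2 * max |a + x| |a| := by
    have := le_max_left |a + x| |a|
    have := le_max_right |a + x| |a|
    linarith
  have h2 : |x| ^ p ≤ (2 * max |a + x| |a|) ^ p :=
    Real.rpow_le_rpow (abs_nonneg x) (h1.trans h3) hp
  have hmax0 : 0 ≤ max |a + x| |a| := le_trans (abs_nonneg a) (le_max_right _ _)
  have h4 : (2 * max |a + x| |a|) ^ p = 2 ^ p * (max |a + x| |a|) ^ p :=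
    Real.mul_rpow (by norm_num) hmax0
  have h5 : (max |a + x| |a|) ^ p ≤ |a + x| ^ p + |a| ^ p := by
    rcases max_cases |a + x| |a| with ⟨hm, _⟩ | ⟨hm, _⟩ <;> rw [hm]
    · nlinarith [Real.rpow_nonneg (abs_nonneg a) p]
    · nlinarith [Real.rpow_nonneg (abs_nonneg (a + x)) p]
  calc |x| ^ p ≤ 2 ^ p * (max |a + x| |a|) ^ p := h4 ▸ h2
  _ ≤ 2 ^ p * (|a + x| ^ p + |a| ^ p) :=
      mul_le_mul_of_nonneg_left h5 (Real.rpow_nonneg (by norm_num) p)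

/-- for a centered integrable random variable `X`, any `a ∈ ℝ` and
`p ∈ (1,3]`, `E[|a+X|^p] ≥ κ^{(p)} (|a|^p + E[|X|^p])`, where `κ^{(p)} = 1/4` for
`1 < p ≤ 2` and `κ^{(p)} = 1/6` for `2 < p ≤ 3`; both sides are values in `[0,∞]`. -/
theorem centered_moment_lower_bound
    {Ω : Type*} [MeasurableSpace Ω] (P : Measure Ω) [IsProbabilityMeasure P]
    (X : Ω → ℝ) (hX : Integrable X P) (hmean : ∫ ω, X ω ∂P = 0)
    (a : ℝ) (p : ℝ) (hp : p ∈ Set.Ioc (1:ℝ) 3) :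
    ENNReal.ofReal (if p ≤ 2 then (1/4 : ℝ) else (1/6 : ℝ)) *
        (ENNReal.ofReal (|a| ^ p) + ∫⁻ ω, ENNReal.ofReal (|X ω| ^ p) ∂P)
      ≤ ∫⁻ ω, ENNReal.ofReal (|a + X ω| ^ p) ∂P := by
  obtain ⟨hp1, hp3⟩ := hp
  have hp0 : (0:ℝ) < p := by linarith
  obtain ⟨c, hc⟩ := pw_master a hp1 hp3
  set κ : ℝ := if p ≤ 2 then (1/4 : ℝ) else (1/6 : ℝ) with hκ
  have hκ0 : 0 ≤ κ := by rw [hκ]; split_ifs <;> norm_num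
  have hXsm := hX.aestronglyMeasurable
  have hcont : Continuous fun t : ℝ => |t| ^ p :=
    continuous_abs.rpow_const (fun t => Or.inr hp0.le)
  have hgm : AEStronglyMeasurable (fun ω => |X ω| ^ p) P :=
    hcont.comp_aestronglyMeasurable hXsm
  have hhm : AEStronglyMeasurable (fun ω => |a + X ω| ^ p) P :=
    hcont.comp_aestronglyMeasurable (aestronglyMeasurable_const.add hXsm)
  by_cases hM : (∫⁻ ω, ENNReal.ofReal (|a + X ω| ^ p) ∂P) = ⊤
  · rw [hM]; exact le_top
  have hEle : (∫⁻ ω, ENNReal.ofReal (|X ω| ^ p) ∂P)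
      ≤ ENNReal.ofReal (2 ^ p) *
        ((∫⁻ ω, ENNReal.ofReal (|a + X ω| ^ p) ∂P) + ENNReal.ofReal (|a| ^ p)) := by
    calc ∫⁻ ω, ENNReal.ofReal (|X ω| ^ p) ∂P
        ≤ ∫⁻ ω, ENNReal.ofReal (2 ^ p * (|a + X ω| ^ p + |a| ^ p)) ∂P :=
          lintegral_mono fun ω => ENNReal.ofReal_le_ofReal (abs_rpow_bound hp0.le a (X ω))
      _ = ∫⁻ ω, ENNReal.ofReal (2 ^ p) *
            (ENNReal.ofReal (|a + X ω| ^ p) + ENNReal.ofReal (|a| ^ p)) ∂P := by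
          congr 1; funext ω
          rw [ENNReal.ofReal_mul (by positivity),
            ENNReal.ofReal_add (by positivity) (by positivity)]
      _ = ENNReal.ofReal (2 ^ p) *
            ((∫⁻ ω, ENNReal.ofReal (|a + X ω| ^ p) ∂P) + ENNReal.ofReal (|a| ^ p)) := by
          rw [lintegral_const_mul' _ _ ENNReal.ofReal_ne_top,
            lintegral_add_right' _ aemeasurable_const, lintegral_const, measure_univ, mul_one]
  have hE : (∫⁻ ω, ENNReal.ofReal (|X ω| ^ p) ∂P) ≠ ⊤ := by
    refine (lt_of_le_of_lt hEle ?_).ne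
    exact ENNReal.mul_lt_top ENNReal.ofReal_lt_top
      (ENNReal.add_lt_top.mpr ⟨lt_top_iff_ne_top.mpr hM, ENNReal.ofReal_lt_top⟩)
  have hgint : Integrable (fun ω => |X ω| ^ p) P := by
    refine ⟨hgm, ?_⟩
    rw [hasFiniteIntegral_iff_ofReal (Filter.Eventually.of_forall fun ω => by positivity)]
    exact lt_top_iff_ne_top.mpr hE
  have hhint : Integrable (fun ω => |a + X ω| ^ p) P := by
    refine ⟨hhm, ?_⟩
    rw [hasFiniteIntegral_iff_ofReal (Filter.Eventually.of_forall fun ω => by positivity)]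
    exact lt_top_iff_ne_top.mpr hM
  rw [← ofReal_integral_eq_lintegral_ofReal hgint
        (Filter.Eventually.of_forall fun ω => by positivity),
      ← ofReal_integral_eq_lintegral_ofReal hhint
        (Filter.Eventually.of_forall fun ω => by positivity),
      ← ENNReal.ofReal_add (by positivity) (integral_nonneg fun ω => by positivity),
      ← ENNReal.ofReal_mul hκ0]
  apply ENNReal.ofReal_le_ofReal
  have hlin : Integrable (fun ω => κ * |a| ^ p + κ * |X ω| ^ p + c * X ω) P :=
    ((integrable_const _).add (hgint.const_mul κ)).add (hX.const_mul c)
  have hmono := integral_mono hlin hhint (fun ω => hc (X ω))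
  have i1 : Integrable (fun ω => κ * |a| ^ p + κ * |X ω| ^ p) P :=
    (integrable_const _).add (hgint.const_mul κ)
  have e : (∫ ω, (κ * |a| ^ p + κ * |X ω| ^ p + c * X ω) ∂P)
      = κ * |a| ^ p + κ * (∫ ω, |X ω| ^ p ∂P) + c * (∫ ω, X ω ∂P) := by
    rw [integral_add i1 (hX.const_mul c), integral_add (integrable_const _) (hgint.const_mul κ),
      integral_const, integral_const_mul, integral_const_mul]
    simp [measure_univ]
  rw [e, hmean, mul_zero, add_zero] at hmono
  rw [mul_add]
  linarith
end
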